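/- Let R be a weakly Baer reduced ring and a, b ∈ R. Then a ∧_rr b exists and equals ea = eb, where e is the idempotent with ann(a − b) = eR. Moreover, for any central non-zero-divisor s, (as) ∧_rr (bs) = (a ∧_rr b)s. -/

import Mathlib

/-!
An element `d` lies rr-below both `a` and `b` exactly when `d * d = d * a` and `d * (a - b) = 0`.
In a reduced ring annihilators are two-sided and idempotents are central, so the second condition
says `d ∈ ann(a - b) = eR`, i.e. `d * e = d`; then `d * d = d * a = d * (e * a)`, and `e * a` is
itself rr-below `a` and `b`. Multiplying by a central non-zero-divisor `s` does not change the
annihilator, `ann((a - b) * s) = ann(a - b)`, so the same idempotent computes `(a * s) ∧rr (b * s)`.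
-/

section RROrder

variable {R : Type*} [Mul R]

def RRLe (d a : R) : Prop := d * d = d * a

infix:50 " ≤rr " => RRLe

def IsRRInf (c a b : R) : Prop := c ≤rr a ∧ c ≤rr b ∧ ∀ d, d ≤rr a → d ≤rr b → d ≤rr c

end RROrder

theorem mul_eq_zero_symm_of_isReduced {R : Type*} [MonoidWithZero R] [IsReduced R] {x y : R}
    (h : x * y = 0) : y * x = 0 :=
  eq_zero_of_pow_eq_zero (n := 2) <| by rw [sq, mul_assoc, ← mul_assoc x, h, zero_mul, mul_zero]

theorem mul_right_mul_eq_zero_iff {R : Type*} [SemigroupWithZero R] {s : R}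
    (hs : ∀ r, s * r = r * s) (hreg : ∀ x, s * x = 0 → x = 0) (x y : R) : x * s * y = 0 ↔ x * y = 0 := by
  rw [mul_assoc, hs, ← mul_assoc, ← hs]
  exact ⟨hreg _, fun h => by rw [h, mul_zero]⟩

section Reduced

variable {R : Type*} [Ring R] [IsReduced R]

/-- Both `(1 - e) * x * e` and `e * x * (1 - e)` square to zero, as `e` and `1 - e` are orthogonal. -/
theorem IsIdempotentElem.commute_of_isReduced {e : R} (he : IsIdempotentElem e) (x : R) :
    Commute e x := by
  have hortho : e * (1 - e) = 0 := by rw [mul_sub, mul_one, he.eq, sub_self]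
  have hortho' : (1 - e) * e = 0 := by rw [sub_mul, one_mul, he.eq, sub_self]
  have hleft : (1 - e) * x * e = 0 := eq_zero_of_pow_eq_zero (n := 2) <| by
    rw [sq, show (1 - e) * x * e * ((1 - e) * x * e) = (1 - e) * x * (e * (1 - e)) * x * e by
      simp only [mul_assoc], hortho, mul_zero, zero_mul, zero_mul]
  have hright : e * x * (1 - e) = 0 := eq_zero_of_pow_eq_zero (n := 2) <| by
    rw [sq, show e * x * (1 - e) * (e * x * (1 - e)) = e * x * ((1 - e) * e) * x * (1 - e) by
      simp only [mul_assoc], hortho', mul_zero, zero_mul, zero_mul]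
  rw [sub_mul, one_mul, sub_mul, sub_eq_zero] at hleft
  rw [mul_sub, mul_one, sub_eq_zero] at hright
  exact hright.trans hleft.symm

variable {e a b : R}

theorem idem_mul_eq_of_annihilator_eq (he : IsIdempotentElem e)
    (hann : ∀ y, (a - b) * y = 0 ↔ ∃ r, y = e * r) : e * a = e * b := by
  have hzero : (a - b) * e = 0 := (hann e).2 ⟨e, he.eq.symm⟩
  rwa [← (he.commute_of_isReduced _).eq, mul_sub, sub_eq_zero] at hzero

theorem isRRInf_idem_mul (he : IsIdempotentElem e)
    (hann : ∀ y, (a - b) * y = 0 ↔ ∃ r, y = e * r) : IsRRInf (e * a) a b := by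
  have hcomm := he.commute_of_isReduced
  have hle_a : e * a ≤rr a := by
    rw [RRLe, ← mul_assoc, mul_assoc e a e, ← (hcomm a).eq, ← mul_assoc, he.eq]
  refine ⟨hle_a, ?_, fun d hda hdb => ?_⟩
  · rw [RRLe, hle_a, (hcomm a).eq, mul_assoc, mul_assoc, idem_mul_eq_of_annihilator_eq he hann]
  · have hd : (a - b) * d = 0 :=
      mul_eq_zero_symm_of_isReduced (by rw [mul_sub, sub_eq_zero, ← hda, ← hdb])
    obtain ⟨r, hr⟩ := (hann d).1 hd
    have hde : d * e = d := by rw [hr, mul_assoc, ← (hcomm r).eq, ← mul_assoc, he.eq]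
    rw [RRLe, ← mul_assoc, hde, hda]

end Reduced

/-- In a weakly Baer reduced ring, `a ∧rr b = ea = eb` where `ann(a-b) = eR`,
and rr-infima distribute over multiplication by central non-zero-divisors. -/
theorem stmt_14 {R : Type*} [Ring R] [IsReduced R]
    (hwB : ∀ x : R, ∃ e : R, e * e = e ∧ ∀ y : R, x * y = 0 ↔ ∃ r : R, y = e * r)
    (a b : R) :
    ∃ e : R, e * e = e ∧ (∀ y : R, (a - b) * y = 0 ↔ ∃ r : R, y = e * r) ∧
      e * a = e * b ∧
      ((e * a) * (e * a) = (e * a) * a ∧ (e * a) * (e * a) = (e * a) * b ∧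
        ∀ d : R, d * d = d * a → d * d = d * b → d * d = d * (e * a)) ∧
      ∀ s : R, (∀ r : R, s * r = r * s) → (∀ x : R, s * x = 0 → x = 0) →
        ((e * a * s) * (e * a * s) = (e * a * s) * (a * s) ∧
          (e * a * s) * (e * a * s) = (e * a * s) * (b * s) ∧
          ∀ d : R, d * d = d * (a * s) → d * d = d * (b * s) →
            d * d = d * (e * a * s)) := by
  obtain ⟨e, he, hann⟩ := hwB (a - b)
  refine ⟨e, he, hann, idem_mul_eq_of_annihilator_eq he hann, isRRInf_idem_mul he hann,
    fun s hs hreg => ?_⟩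
  have hann_s : ∀ y, (a * s - b * s) * y = 0 ↔ ∃ r, y = e * r := fun y => by
    rw [← sub_mul, mul_right_mul_eq_zero_iff hs hreg]
    exact hann y
  rw [mul_assoc e a s]
  exact isRRInf_idem_mul he hann_s
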